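/- arXiv:1512.02299 — 3 statements merged into one kernel-verified Lean document; each statement's English description precedes it below -/
import Mathlib

section
/- Let G be a group, E a perfect subgroup of G whose centralizer in G equals the center Z(G), and H a subgroup of G normalized by E. If ⁅H, E⁆ ≤ Z(G), then H ≤ Z(G). -/
/-! By the three subgroups lemma, `⁅⁅E, E⁆, H⁆` is trivial as soon as `⁅⁅E, H⁆, E⁆` and
`⁅⁅H, E⁆, E⁆` are, and both are commutators of a central subgroup with `E`. Since `E` is perfect,
`H` centralizes `E`, and the centralizer of `E` is the center. -/

namespace Subgroup

variable {G : Type*} [Group G]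

theorem commutator_eq_bot_of_le_center {H K : Subgroup G} (h : H ≤ center G) :
    ⁅H, K⁆ = ⊥ :=
  eq_bot_iff.mpr ((commutator_mono h le_rfl).trans (commutator_center_left K).le)

theorem commutator_eq_bot_of_perfect_of_commutator_le_center {E H : Subgroup G}
    (hE : ⁅E, E⁆ = E) (hc : ⁅H, E⁆ ≤ center G) : ⁅E, H⁆ = ⊥ := by
  have hHE : ⁅⁅H, E⁆, E⁆ = ⊥ := commutator_eq_bot_of_le_center hc
  have hEH : ⁅⁅E, H⁆, E⁆ = ⊥ := by rwa [commutator_comm E H]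
  calc ⁅E, H⁆ = ⁅⁅E, E⁆, H⁆ := by rw [hE]
    _ = ⊥ := commutator_commutator_eq_bot_of_rotate hEH hHE

end Subgroup

theorem stmt_2_general {G : Type*} [Group G] (E H : Subgroup G)
    (hE : ⁅E, E⁆ = E)
    (hcent : Subgroup.centralizer (E : Set G) = Subgroup.center G)
    (hc : ⁅H, E⁆ ≤ Subgroup.center G) :
    H ≤ Subgroup.center G := by
  have hEH := Subgroup.commutator_eq_bot_of_perfect_of_commutator_le_center hE hc
  rwa [Subgroup.commutator_eq_bot_iff_le_centralizer, Subgroup.le_centralizer_iff, hcent] at hEH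

/-- If E is a perfect subgroup of G whose centralizer equals the center of G,
H is normalized by E, and ⁅H, E⁆ ≤ Z(G), then H ≤ Z(G). -/
theorem stmt_2 {G : Type*} [Group G] (E H : Subgroup G)
    (hE : ⁅E, E⁆ = E)
    (hcent : Subgroup.centralizer (E : Set G) = Subgroup.center G)
    (hnorm : ∀ e ∈ E, ∀ h ∈ H, e⁻¹ * h * e ∈ H)
    (hc : ⁅H, E⁆ ≤ Subgroup.center G) :
    H ≤ Subgroup.center G :=
  stmt_2_general E H hE hcent hc
end

section
/- Let F be a field and n ≥ 1. Every matrix M ∈ GL_n(F) can be written as M = B₁ · P · B₂ where B₁ and B₂ are invertible upper triangular matrices and P is a permutation matrix (Bruhat decomposition). -/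
/-!
Induct on `n`. Let `q` be the leading (leftmost nonzero) column of the last row of `M`, with
entry `d`. Clearing row `n` and column `q` with the pivot `d` writes `M = L * X * U`, where `L`
only changes the last column of `1` and is therefore upper triangular, `U` only changes row `q`
and is upper triangular because `q` is leading, and `X` has the single nonzero entry `d` in its
last row and in its column `q`. The remaining minor of `X` is the Schur complement of `d`, which
is invertible; its Bruhat decomposition, reinserted around the pivot, decomposes `X`.
-/

namespace Matrix

variable {ι R : Type*}

section UpdateOne

variable [Fintype ι] [DecidableEq ι]

theorem det_updateRow_one [CommRing R] (q : ι) (r : ι → R) :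
    (updateRow (1 : Matrix ι ι R) q r).det = r q := by
  convert det_updateRow_sum (1 : Matrix ι ι R) q r using 3
  · ext k; simp [Finset.sum_apply, one_apply]
  · simp

theorem det_updateCol_one [CommRing R] (p : ι) (v : ι → R) :
    (updateCol (1 : Matrix ι ι R) p v).det = v p := by
  convert det_updateCol_sum (1 : Matrix ι ι R) p v using 3
  · ext k; simp [one_apply]
  · simp

theorem updateCol_one_mul_apply [NonAssocSemiring R] (p : ι) (v : ι → R) (X : Matrix ι ι R)
    (i k : ι) : (updateCol 1 p v * X) i k = (if i = p then 0 else X i k) + v i * X p k := by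
  rw [mul_apply, ← Finset.add_sum_erase _ _ (Finset.mem_univ p), add_comm, updateCol_self]
  congr 1
  rw [Finset.sum_congr rfl fun j hj => by rw [updateCol_ne (Finset.ne_of_mem_erase hj)]]
  simp [one_apply, eq_comm]

theorem mul_updateRow_one_apply [NonAssocSemiring R] (q : ι) (r : ι → R) (X : Matrix ι ι R)
    (i k : ι) : (X * updateRow 1 q r) i k = (if k = q then 0 else X i k) + X i q * r k := by
  rw [mul_apply, ← Finset.add_sum_erase _ _ (Finset.mem_univ q), add_comm, updateRow_self]
  congr 1
  rw [Finset.sum_congr rfl fun j hj => by rw [updateRow_ne (Finset.ne_of_mem_erase hj)]]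
  simp [one_apply, eq_comm]

end UpdateOne

section Borel

variable [Fintype ι] [DecidableEq ι] [LinearOrder ι] [CommRing R]

variable (ι R) in
def borelSubmonoid : Submonoid (Matrix ι ι R) where
  carrier := {B | B.IsUpperTriangular ∧ IsUnit B.det}
  mul_mem' := fun ⟨hA, hdA⟩ ⟨hB, hdB⟩ => ⟨hA.mul hB, by rw [det_mul]; exact hdA.mul hdB⟩
  one_mem' := ⟨blockTriangular_one, by simp⟩

theorem updateRow_one_mem_borelSubmonoid {q : ι} {r : ι → R} (hr : ∀ k < q, r k = 0)
    (hq : IsUnit (r q)) : updateRow 1 q r ∈ borelSubmonoid ι R := by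
  refine ⟨fun i k hki => ?_, by rwa [det_updateRow_one]⟩
  rcases eq_or_ne i q with rfl | hi
  · simpa using hr k hki
  · rw [updateRow_ne hi]; exact blockTriangular_one hki

theorem updateCol_one_mem_borelSubmonoid {p : ι} {v : ι → R} (hv : ∀ i, p < i → v i = 0)
    (hp : IsUnit (v p)) : updateCol 1 p v ∈ borelSubmonoid ι R := by
  refine ⟨fun i k hki => ?_, by rwa [det_updateCol_one]⟩
  rcases eq_or_ne k p with rfl | hk
  · simpa using hv i hki
  · rw [updateCol_ne hk]; exact blockTriangular_one hki

end Borel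

section ExtendAt

variable {n : ℕ}

def finSuccEquivSum (p : Fin (n + 1)) : Fin (n + 1) ≃ Fin n ⊕ Unit :=
  (finSuccEquiv' p).trans (Equiv.optionEquivSumPUnit _)

@[simp] theorem finSuccEquivSum_self (p : Fin (n + 1)) : finSuccEquivSum p p = Sum.inr () := by
  simp [finSuccEquivSum]

@[simp] theorem finSuccEquivSum_succAbove (p : Fin (n + 1)) (i : Fin n) :
    finSuccEquivSum p (p.succAbove i) = Sum.inl i := by
  simp [finSuccEquivSum]

/-- The matrix with `A` as its minor away from row `p` and column `q`, and whose row `p` and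
column `q` vanish except for the entry `d` at `(p, q)`. -/
def extendAt [Zero R] (p q : Fin (n + 1)) (A : Matrix (Fin n) (Fin n) R) (d : R) :
    Matrix (Fin (n + 1)) (Fin (n + 1)) R :=
  (fromBlocks A 0 0 (of fun _ _ => d)).submatrix (finSuccEquivSum p) (finSuccEquivSum q)

section Zero

variable [Zero R] (p q : Fin (n + 1)) (A : Matrix (Fin n) (Fin n) R) (d : R)

@[simp] theorem extendAt_apply_self_self : extendAt p q A d p q = d := by simp [extendAt]

@[simp] theorem extendAt_apply_self_succAbove (k : Fin n) :
    extendAt p q A d p (q.succAbove k) = 0 := by simp [extendAt]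

@[simp] theorem extendAt_apply_succAbove_self (i : Fin n) :
    extendAt p q A d (p.succAbove i) q = 0 := by simp [extendAt]

@[simp] theorem extendAt_apply_succAbove_succAbove (i k : Fin n) :
    extendAt p q A d (p.succAbove i) (q.succAbove k) = A i k := by simp [extendAt]

@[simp] theorem submatrix_succAbove_extendAt :
    (extendAt p q A d).submatrix p.succAbove q.succAbove = A := by
  ext; simp

theorem IsUpperTriangular.extendAt {A : Matrix (Fin n) (Fin n) R} (hA : A.IsUpperTriangular) :
    (extendAt p p A d).IsUpperTriangular := by
  intro i j hji
  obtain hi | ⟨i, rfl⟩ := Fin.eq_self_or_eq_succAbove p i <;>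
    obtain hj | ⟨j, rfl⟩ := Fin.eq_self_or_eq_succAbove p j
  · subst i j; exact absurd hji (lt_irrefl _)
  · subst i; simp
  · subst j; simp
  · simpa using hA (Fin.succAbove_lt_succAbove_iff.mp hji)

end Zero

theorem extendAt_mul [NonUnitalNonAssocSemiring R] (p q r : Fin (n + 1))
    (A B : Matrix (Fin n) (Fin n) R) (a b : R) :
    extendAt p q A a * extendAt q r B b = extendAt p r (A * B) (a * b) := by
  rw [extendAt, extendAt, submatrix_mul_equiv, fromBlocks_multiply]
  congr
  all_goals ext; simp [mul_apply]

theorem extendAt_permMatrix [Zero R] [One R] (p q : Fin (n + 1)) (σ : Equiv.Perm (Fin n)) :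
    extendAt p q (σ.permMatrix R) 1 =
      Equiv.Perm.permMatrix R ((finSuccEquivSum p).trans
        ((σ.sumCongr (Equiv.refl Unit)).trans (finSuccEquivSum q).symm)) := by
  ext i j
  obtain hi | ⟨i, rfl⟩ := Fin.eq_self_or_eq_succAbove p i <;>
    obtain hj | ⟨j, rfl⟩ := Fin.eq_self_or_eq_succAbove q j <;>
    (try subst i) <;> (try subst j) <;>
    simp [PEquiv.toMatrix_apply, Equiv.symm_apply_eq]

theorem det_extendAt [CommRing R] (p q : Fin (n + 1)) (A : Matrix (Fin n) (Fin n) R) (d : R) :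
    (extendAt p q A d).det = (-1) ^ (p + q : ℕ) * d * A.det := by
  rw [det_succ_row _ p, Finset.sum_eq_single q]
  · simp
  · intro k _ hk
    obtain ⟨k, rfl⟩ := Fin.exists_succAbove_eq hk
    simp
  · simp

theorem extendAt_mem_borelSubmonoid [CommRing R] (p : Fin (n + 1))
    {A : Matrix (Fin n) (Fin n) R} {d : R} (hA : A ∈ borelSubmonoid (Fin n) R) (hd : IsUnit d) :
    extendAt p p A d ∈ borelSubmonoid (Fin (n + 1)) R := by
  refine ⟨hA.1.extendAt p d, ?_⟩
  rw [det_extendAt, Even.neg_one_pow ⟨p, rfl⟩, one_mul]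
  exact hd.mul hA.2

end ExtendAt

section Pivot

variable {K : Type*} [Field K] {n : ℕ}

def pivotSchurComplement (M : Matrix (Fin (n + 1)) (Fin (n + 1)) K) (p q : Fin (n + 1)) :
    Matrix (Fin n) (Fin n) K :=
  of fun i k =>
    M (p.succAbove i) (q.succAbove k) - M (p.succAbove i) q * M p (q.succAbove k) / M p q

theorem eq_updateCol_mul_extendAt_mul_updateRow (M : Matrix (Fin (n + 1)) (Fin (n + 1)) K)
    {p q : Fin (n + 1)} (h : M p q ≠ 0) :
    M = updateCol 1 p (fun i => M i q / M p q) * extendAt p q (pivotSchurComplement M p q) (M p q) *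
      updateRow 1 q (fun k => M p k / M p q) := by
  ext i k
  rw [mul_updateRow_one_apply, updateCol_one_mul_apply, updateCol_one_mul_apply]
  obtain hi | ⟨i, rfl⟩ := Fin.eq_self_or_eq_succAbove p i <;>
    obtain hk | ⟨k, rfl⟩ := Fin.eq_self_or_eq_succAbove q k <;>
    (try subst i) <;> (try subst k) <;>
    simp [pivotSchurComplement, Fin.succAbove_ne] <;> field_simp; ring

theorem isUnit_det_pivotSchurComplement {M : Matrix (Fin (n + 1)) (Fin (n + 1)) K}
    (hM : IsUnit M.det) {p q : Fin (n + 1)} (h : M p q ≠ 0) :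
    IsUnit (pivotSchurComplement M p q).det := by
  rw [eq_updateCol_mul_extendAt_mul_updateRow M h, det_mul, det_mul, det_updateCol_one,
    det_updateRow_one, div_self h, one_mul, mul_one, det_extendAt] at hM
  exact isUnit_of_mul_isUnit_right hM

end Pivot

theorem exists_mem_borelSubmonoid_mul_permMatrix_mul {K : Type*} [Field K] :
    ∀ {n : ℕ} (M : Matrix (Fin n) (Fin n) K), IsUnit M.det →
      ∃ B₁ ∈ borelSubmonoid (Fin n) K, ∃ B₂ ∈ borelSubmonoid (Fin n) K,
        ∃ σ : Equiv.Perm (Fin n), M = B₁ * σ.permMatrix K * B₂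
  | 0, M, _ => ⟨1, one_mem _, 1, one_mem _, 1, Subsingleton.elim _ _⟩
  | n + 1, M, hM => by
    obtain ⟨q, hq_leading, hq⟩ : ∃ q, M.IsLeadingEntry (Fin.last n) q :=
      row_ne_zero_iff_exists_isLeadingEntry.mp fun h =>
        hM.ne_zero (det_eq_zero_of_row_eq_zero _ (congrFun h))
    obtain ⟨B₁, hB₁, B₂, hB₂, σ, hA⟩ := exists_mem_borelSubmonoid_mul_permMatrix_mul
      (pivotSchurComplement M (Fin.last n) q) (isUnit_det_pivotSchurComplement hM hq)
    set d := M (Fin.last n) q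
    have hL : updateCol 1 (Fin.last n) (fun i => M i q / d) ∈ borelSubmonoid (Fin (n + 1)) K :=
      updateCol_one_mem_borelSubmonoid (fun i hi => absurd hi (Fin.le_last i).not_gt)
        (by simp [d, hq])
    have hU : updateRow 1 q (fun k => M (Fin.last n) k / d) ∈ borelSubmonoid (Fin (n + 1)) K :=
      updateRow_one_mem_borelSubmonoid (fun k hk => by simp [hq_leading k hk]) (by simp [d, hq])
    have hX : extendAt (Fin.last n) q (pivotSchurComplement M (Fin.last n) q) d =
        extendAt (Fin.last n) (Fin.last n) B₁ 1 * extendAt (Fin.last n) q (σ.permMatrix K) 1 *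
          extendAt q q B₂ d := by
      rw [extendAt_mul, extendAt_mul, one_mul, one_mul, hA]
    have hM_eq := eq_updateCol_mul_extendAt_mul_updateRow M hq
    rw [hX, extendAt_permMatrix, ← mul_assoc, ← mul_assoc, mul_assoc _ (extendAt q q B₂ d)]
      at hM_eq
    exact ⟨_, mul_mem hL (extendAt_mem_borelSubmonoid _ hB₁ isUnit_one), _,
      mul_mem (extendAt_mem_borelSubmonoid _ hB₂ (isUnit_iff_ne_zero.mpr hq)) hU, _, hM_eq⟩

end Matrix

theorem stmt_11_general {F : Type*} [Field F] {n : ℕ}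
    (M : GL (Fin n) F) :
    ∃ (B₁ B₂ : Matrix (Fin n) (Fin n) F) (σ : Equiv.Perm (Fin n)),
      (∀ i j : Fin n, j < i → B₁ i j = 0) ∧ IsUnit B₁.det ∧
      (∀ i j : Fin n, j < i → B₂ i j = 0) ∧ IsUnit B₂.det ∧
      (M : Matrix (Fin n) (Fin n) F) = B₁ * σ.permMatrix F * B₂ := by
  obtain ⟨B₁, hB₁, B₂, hB₂, σ, h⟩ := Matrix.exists_mem_borelSubmonoid_mul_permMatrix_mul
    (M : Matrix (Fin n) (Fin n) F) ((Matrix.isUnit_iff_isUnit_det _).mp M.isUnit)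
  exact ⟨B₁, B₂, σ, fun i j hij => hB₁.1 hij, hB₁.2, fun i j hij => hB₂.1 hij, hB₂.2, h⟩

/-- Bruhat decomposition: every M ∈ GL_n(F) is B₁ · P · B₂ with B₁, B₂
invertible upper triangular and P a permutation matrix. -/
theorem stmt_11 {F : Type*} [Field F] {n : ℕ} (hn : 1 ≤ n)
    (M : GL (Fin n) F) :
    ∃ (B₁ B₂ : Matrix (Fin n) (Fin n) F) (σ : Equiv.Perm (Fin n)),
      (∀ i j : Fin n, j < i → B₁ i j = 0) ∧ IsUnit B₁.det ∧
      (∀ i j : Fin n, j < i → B₂ i j = 0) ∧ IsUnit B₂.det ∧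
      (M : Matrix (Fin n) (Fin n) F) = B₁ * σ.permMatrix F * B₂ :=
  stmt_11_general M
end

section
/- Let R be a commutative ring, n ≥ 3, and H a subgroup of GL_n(R) normalized by the elementary subgroup E_n(R). For distinct indices i, j define q_{ij}(H) = { t ∈ R : e_{ij}(t) ∈ H }. Then q_{ij}(H) does not depend on the pair (i,j): q_{ij}(H) = q_{kl}(H) for all pairs of distinct indices, and q_{ij}(H) is an ideal of R. -/
/-- The elementary subgroup E_n(R) of GL_n(R). -/
def elemSubgroup (R : Type*) [CommRing R] (n : ℕ) : Subgroup (GL (Fin n) R) :=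
  Subgroup.closure {g : GL (Fin n) R | ∃ i j : Fin n, ∃ r : R, i ≠ j ∧
    (g : Matrix (Fin n) (Fin n) R) = 1 + r • Matrix.single i j 1}

/-!
For distinct `i, j, k` the Steinberg relation `⁅e_ki(a), e_ij(t)⁆ = e_kj(a t)` exhibits
`e_kj(a t)` as a conjugate of `e_ij(t)` by an elementary matrix times `e_ij(t)⁻¹`, so it lies in
`H` whenever `e_ij(t)` does; likewise `⁅e_ij(t), e_jl(a)⁆ = e_il(t a)`. Passing through a third
index, which exists since `n ≥ 3`, these moves connect any two positions, and moving away and back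
with a factor `a` shows that `q_ij(H)` is stable under multiplication by `R`. Additivity comes
from `e_ij(s) e_ij(t) = e_ij(s + t)`.
-/

open Matrix SpecialLinearGroup
open scoped commutatorElement

section

variable {ι R : Type*} [Fintype ι] [DecidableEq ι] [CommRing R]

theorem Matrix.SpecialLinearGroup.commutator_transvection_transvection {i j l : ι}
    (hij : i ≠ j) (hjl : j ≠ l) (hil : i ≠ l) (a b : R) :
    ⁅transvection hij a, transvection hjl b⁆ = transvection hil (a * b) := by
  refine Subtype.ext ?_
  simp only [commutatorElement_def, transvection_inv, coe_mul, transvection_coe, mul_add, add_mul,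
    one_mul, mul_one, single_mul_single_same, single_mul_single_of_ne _ _ _ _ hij.symm,
    single_mul_single_of_ne _ _ _ _ hjl.symm, single_mul_single_of_ne _ _ _ _ hil.symm,
    add_zero, mul_neg, neg_mul, ← single_neg]
  abel

def IsNormalizedByTransvections (H : Subgroup (GL ι R)) : Prop :=
  ∀ ⦃i j : ι⦄ (hij : i ≠ j) (c : R),
    toGL (transvection hij c) ∈ Subgroup.normalizer (H : Set (GL ι R))

def levelSet (H : Subgroup (GL ι R)) (i j : ι) : Set R :=
  {t | ∃ h ∈ H, (h : Matrix ι ι R) = Matrix.transvection i j t}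

section levelSet

variable {H : Subgroup (GL ι R)} {i j k l : ι} {t : R}

theorem mem_levelSet_iff (hij : i ≠ j) :
    t ∈ levelSet H i j ↔ toGL (transvection hij t) ∈ H :=
  ⟨fun ⟨h, hh, he⟩ ↦ (Units.ext he : h = toGL (transvection hij t)) ▸ hh,
    fun ht ↦ ⟨_, ht, rfl⟩⟩

theorem zero_mem_levelSet (i j : ι) : (0 : R) ∈ levelSet H i j :=
  ⟨1, H.one_mem, by rw [Matrix.transvection_zero, Units.val_one]⟩

theorem add_mem_levelSet (hij : i ≠ j) {s : R} (hs : s ∈ levelSet H i j)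
    (ht : t ∈ levelSet H i j) : s + t ∈ levelSet H i j := by
  rw [mem_levelSet_iff hij] at *
  rw [transvection_add, map_mul]
  exact H.mul_mem hs ht

theorem IsNormalizedByTransvections.conj_mem (hH : IsNormalizedByTransvections H) (hij : i ≠ j)
    (c : R) {h : GL ι R} (hh : h ∈ H) :
    toGL (transvection hij c) * h * (toGL (transvection hij c))⁻¹ ∈ H :=
  (Subgroup.mem_normalizer_iff.mp (hH hij c) h).mp hh

theorem mul_mem_levelSet_of_ne_left (hH : IsNormalizedByTransvections H) (hij : i ≠ j)
    (hki : k ≠ i) (hkj : k ≠ j) (a : R) (ht : t ∈ levelSet H i j) :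
    a * t ∈ levelSet H k j := by
  rw [mem_levelSet_iff hij] at ht
  rw [mem_levelSet_iff hkj, ← commutator_transvection_transvection hki hij hkj,
    map_commutatorElement, commutatorElement_def]
  exact H.mul_mem (hH.conj_mem hki a ht) (H.inv_mem ht)

theorem mul_mem_levelSet_of_ne_right (hH : IsNormalizedByTransvections H) (hij : i ≠ j)
    (hjl : j ≠ l) (hil : i ≠ l) (a : R) (ht : t ∈ levelSet H i j) :
    t * a ∈ levelSet H i l := by
  rw [mem_levelSet_iff hij] at ht
  rw [mem_levelSet_iff hil, ← commutator_transvection_transvection hij hjl hil,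
    map_commutatorElement, commutatorElement_def]
  simpa only [mul_assoc] using H.mul_mem ht (hH.conj_mem hjl a (H.inv_mem ht))

theorem levelSet_subset_left (hH : IsNormalizedByTransvections H) (hij : i ≠ j) (hkj : k ≠ j) :
    levelSet H i j ⊆ levelSet H k j := by
  rcases eq_or_ne k i with rfl | hki
  · exact subset_rfl
  · intro t ht
    simpa using mul_mem_levelSet_of_ne_left hH hij hki hkj 1 ht

theorem levelSet_subset_right (hH : IsNormalizedByTransvections H) (hij : i ≠ j) (hil : i ≠ l) :
    levelSet H i j ⊆ levelSet H i l := by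
  rcases eq_or_ne j l with rfl | hjl
  · exact subset_rfl
  · intro t ht
    simpa using mul_mem_levelSet_of_ne_right hH hij hjl hil 1 ht

variable (hH : IsNormalizedByTransvections H) (hι : 3 ≤ ENat.card ι)
include hH hι

theorem levelSet_subset (hij : i ≠ j) (hkl : k ≠ l) : levelSet H i j ⊆ levelSet H k l := by
  obtain ⟨m, hmi, hmk⟩ := ENat.exists_ne_ne_of_three_le hι i k
  calc levelSet H i j ⊆ levelSet H i m := levelSet_subset_right hH hij hmi.symm
    _ ⊆ levelSet H k m := levelSet_subset_left hH hmi.symm hmk.symm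
    _ ⊆ levelSet H k l := levelSet_subset_right hH hmk.symm hkl

theorem levelSet_eq (hij : i ≠ j) (hkl : k ≠ l) : levelSet H i j = levelSet H k l :=
  (levelSet_subset hH hι hij hkl).antisymm (levelSet_subset hH hι hkl hij)

theorem mul_mem_levelSet (hij : i ≠ j) (a : R) (ht : t ∈ levelSet H i j) :
    a * t ∈ levelSet H i j := by
  obtain ⟨m, hmi, hmj⟩ := ENat.exists_ne_ne_of_three_le hι i j
  exact mul_mem_levelSet_of_ne_left hH hmj hmi.symm hij a
    (levelSet_subset_left hH hij hmj ht)

def levelIdeal (hij : i ≠ j) : Ideal R where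
  carrier := levelSet H i j
  zero_mem' := zero_mem_levelSet i j
  add_mem' := add_mem_levelSet hij
  smul_mem' a _ := mul_mem_levelSet hH hι hij a

end levelSet

theorem isNormalizedByTransvections_of_conj_mem {n : ℕ} {H : Subgroup (GL (Fin n) R)}
    (hnorm : ∀ e ∈ elemSubgroup R n, ∀ h ∈ H, e⁻¹ * h * e ∈ H) :
    IsNormalizedByTransvections H := by
  intro i j hij c
  set g : GL (Fin n) R := toGL (transvection hij c)
  have hg : g ∈ elemSubgroup R n :=
    Subgroup.subset_closure ⟨i, j, c, hij, by simp [g, transvection_coe, smul_single]⟩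
  refine Subgroup.mem_normalizer_iff.mpr fun h ↦ ⟨fun hh ↦ ?_, fun hh ↦ ?_⟩
  · simpa using hnorm g⁻¹ (inv_mem hg) h hh
  · simpa [mul_assoc] using hnorm g hg _ hh

end

/-- Level computation: for H ≤ GL_n(R) (n ≥ 3) normalized by E_n(R), the sets
q_{ij}(H) = { t : e_{ij}(t) ∈ H } coincide for all pairs of distinct indices
and form an ideal of R. -/
theorem stmt_16 {R : Type*} [CommRing R] {n : ℕ} (hn : 3 ≤ n)
    (H : Subgroup (GL (Fin n) R))
    (hnorm : ∀ e ∈ elemSubgroup R n, ∀ h ∈ H, e⁻¹ * h * e ∈ H) :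
    let q : Fin n → Fin n → Set R := fun i j =>
      {t : R | ∃ h ∈ H, (h : Matrix (Fin n) (Fin n) R) =
        1 + t • Matrix.single i j 1}
    (∀ i j k l : Fin n, i ≠ j → k ≠ l → q i j = q k l) ∧
    (∃ I : Ideal R, ∀ i j : Fin n, i ≠ j → q i j = (I : Set R)) := by
  intro q
  have hq : q = levelSet H := by
    ext i j t
    simp [q, levelSet, Matrix.transvection, smul_single]
  have hH := isNormalizedByTransvections_of_conj_mem hnorm
  have hcard : 3 ≤ ENat.card (Fin n) := by simpa using hn
  have : Nontrivial (Fin n) := Fin.nontrivial_iff_two_le.mpr (by omega)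
  obtain ⟨i₀, j₀, hij₀⟩ := exists_pair_ne (Fin n)
  rw [hq]
  exact ⟨fun i j k l hij hkl ↦ levelSet_eq hH hcard hij hkl,
    levelIdeal hH hcard hij₀, fun i j hij ↦ levelSet_eq hH hcard hij hij₀⟩
end
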